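/- The element a·b·d⁴ + c·d·b⁴ of S lies in the ideal J. (This is the computation showing that the differential d₁₇ of the Leray–Serre spectral sequence vanishes on u₁¹⁶: Sq⁸(w₃'w₃''² + w₃'²w₃'') = w₂'w₃'w₃''⁴ + w₂''w₃''w₃'⁴ ≡ 0 modulo the earlier relations.) -/

import Mathlib

open MvPolynomial

/-- `S = ℤ/2[a,b,c,d] ≅ H^*(BSO(3)²; ℤ/2)` with `a = w₂'`, `b = w₃'`, `c = w₂''`, `d = w₃''`. -/
noncomputable abbrev S : Type := MvPolynomial (Fin 4) (ZMod 2)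

noncomputable def a : S := X 0
noncomputable def b : S := X 1
noncomputable def c : S := X 2
noncomputable def d : S := X 3

/-- The ideal `J = (a·d + c·b, b·d² + b²·d)` of relations. -/
noncomputable def J : Ideal S := Ideal.span {a * d + c * b, b * d ^ 2 + b ^ 2 * d}

/-- `N = S ⧸ J`, the bottom line of the `E_∞`-term. -/
noncomputable abbrev N : Type := S ⧸ J

/-- The quotient map `π : S → N`. -/
noncomputable def π : S →+* N := Ideal.Quotient.mk J

theorem mem_span_pair_of_charTwo {R : Type*} [CommRing R] [CharP R 2] (x y z w : R) :
    x * y * w ^ 4 + z * w * y ^ 4 ∈ Ideal.span {x * w + z * y, y * w ^ 2 + y ^ 2 * w} := by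
  refine Ideal.mem_span_pair.mpr ⟨y * w ^ 3, z * y * (w + y), ?_⟩
  -- the cross terms `2 z y² w²(w + y)` vanish in characteristic 2
  linear_combination (z * y ^ 2 * w ^ 3 + z * y ^ 3 * w ^ 2) * CharTwo.two_eq_zero (R := R)

theorem stmt_16 : a * b * d ^ 4 + c * d * b ^ 4 ∈ J :=
  mem_span_pair_of_charTwo a b c d
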